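/- Let d be odd and Δ ≥ 2. In the Petersen-graph ILP construction (constraint matrix A ∈ ℤ^{15d×(6+15d)}_{≥0} with ‖A‖_∞ = Δ and right-hand side b with block-row j equal to Δ^{j-1}·(1,…,1)), the vector z taking each of the 6 matching columns with coefficient 1/2, each odd block of identity columns with coefficient 0, and each even block j with coefficient Δ^{j-1}, is a nonnegative rational solution of Az = b. -/

import Mathlib

/-- The Petersen graph, presented as the Kneser graph `K(5,2)`: vertices are the
2-element subsets of `Fin 5`, adjacent iff disjoint. -/
def Petersen : SimpleGraph {s : Finset (Fin 5) // s.card = 2} where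
  Adj a b := Disjoint a.1 b.1
  symm := ⟨fun a b h => h.symm⟩
  loopless := ⟨fun a h => by
    have h := Finset.disjoint_self_iff_empty _ |>.mp h
    have h2 := a.2
    rw [h] at h2
    simp at h2⟩

open scoped Classical

/-- The `15d × (6+15d)` block matrix of the Petersen-graph construction: the
first 6 columns are `(M; 0; …; 0)` with `M` the edge/matching incidence matrix
of the Petersen graph; the remaining `d` blocks of 15 columns contribute `I₁₅`
in block-row `j` and `Δ·I₁₅` in block-row `j+1`. -/
noncomputable def blockMatQ (d : ℕ) (Δ : ℤ) (eE : Fin 15 ≃ Petersen.edgeSet)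
    (eM : Fin 6 ≃ {M : Petersen.Subgraph // M.IsPerfectMatching}) :
    Matrix (Fin (15 * d)) (Fin (6 + 15 * d)) ℚ :=
  fun r c =>
    if hc : (c : ℕ) < 6 then
      (if hr : (r : ℕ) < 15 then
        (if (eE ⟨(r : ℕ), hr⟩ : Sym2 _) ∈ (eM ⟨(c : ℕ), hc⟩).1.edgeSet then 1 else 0)
      else 0)
    else if (r : ℕ) + 6 = (c : ℕ) then 1
    else if (r : ℕ) + 6 = (c : ℕ) + 15 then (Δ : ℚ) else 0

/-- The right-hand side whose block-row `j` equals `Δ^(j-1) · (1,…,1) ∈ ℚ^15`. -/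
def blockRhs (d : ℕ) (Δ : ℤ) : Fin (15 * d) → ℚ := fun r => (Δ : ℚ) ^ ((r : ℕ) / 15)

/-- The fractional solution of the Petersen-graph construction: each of the 6
matching columns with coefficient `1/2`, each odd block of identity columns
(0-indexed: each even block) with coefficient `0`, and each even block `j`
(0-indexed: odd block `j'`) with coefficient `Δ^{j'}`. -/
def fracSol (d : ℕ) (Δ : ℤ) : Fin (6 + 15 * d) → ℚ := fun c =>
  if (c : ℕ) < 6 then 1 / 2
  else if Odd (((c : ℕ) - 6) / 15) then (Δ : ℚ) ^ (((c : ℕ) - 6) / 15) else 0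

/-!
Every edge of the Petersen graph lies in exactly two of its six perfect matchings. Indeed the
graph is edge-transitive (`S₅` acts on the 2-subsets of `Fin 5`), so this number `k` is the same
for all 15 edges, and counting the pairs (edge, perfect matching through it) in two ways gives
`2 · 15 · k = 6 · 10`. Hence the six matching columns, weighted by `1/2`, contribute exactly `1`
to each row of block `0` and nothing to the other rows. A row of block `j ≥ 1` meets the
identity columns of block `j` with coefficient `1` and those of block `j - 1` with coefficient
`Δ`; exactly one of `j`, `j - 1` is odd, so it receives `Δ ^ j` in either case.
-/

namespace SimpleGraph
variable {V W : Type*} {G : SimpleGraph V} {G' : SimpleGraph W}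

theorem Subgraph.IsPerfectMatching.two_mul_card_edgeSet [Fintype V] {M : G.Subgraph}
    (hM : M.IsPerfectMatching) : 2 * Nat.card M.edgeSet = Fintype.card V := by
  classical
  have hdeg : ∀ v, M.spanningCoe.degree v = 1 := fun v => by
    rw [Subgraph.degree_spanningCoe, (Subgraph.isPerfectMatching_iff_forall_degree.mp hM) v]
  have := M.spanningCoe.sum_degrees_eq_twice_card_edges
  simp only [hdeg, Finset.sum_const, Finset.card_univ, smul_eq_mul, mul_one] at this
  rw [this, ← Subgraph.edgeSet_spanningCoe, ← coe_edgeFinset, Nat.card_coe_set_eq,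
    Set.ncard_coe_finset]

theorem Iso.isPerfectMatching_map (f : G ≃g G') {M : G.Subgraph} :
    (M.map f.toHom).IsPerfectMatching ↔ M.IsPerfectMatching := by
  simp only [Subgraph.IsPerfectMatching, Subgraph.Iso.isMatching_map, Subgraph.isSpanning_iff,
    Subgraph.map_verts]
  refine and_congr_right fun _ => ?_
  exact (Set.image_univ_of_surjective f.surjective).symm ▸
    (Set.image_injective.mpr f.injective).eq_iff

theorem Iso.mem_edgeSet_map_iff (f : G ≃g G') {M : G.Subgraph} {e : Sym2 V} :
    e.map f ∈ (M.map f.toHom).edgeSet ↔ e ∈ M.edgeSet := by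
  rw [Subgraph.edgeSet_map]
  exact (Sym2.map.injective f.injective).mem_set_image

def Iso.perfectMatchingEquiv (f : G ≃g G') :
    {M : G.Subgraph // M.IsPerfectMatching} ≃ {M : G'.Subgraph // M.IsPerfectMatching} where
  toFun M := ⟨M.1.map f.toHom, f.isPerfectMatching_map.mpr M.2⟩
  invFun M := ⟨M.1.map f.symm.toHom, f.symm.isPerfectMatching_map.mpr M.2⟩
  left_inv M := Subtype.ext <| by
    dsimp only
    rw [← Subgraph.map_comp, Iso.symm_toHom_comp_toHom, Subgraph.map_id]
  right_inv M := Subtype.ext <| by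
    dsimp only
    rw [← Subgraph.map_comp, Iso.toHom_comp_symm_toHom, Subgraph.map_id]

variable (G) in
noncomputable def numPerfectMatchingsThrough (e : Sym2 V) : ℕ :=
  Nat.card {M : {M : G.Subgraph // M.IsPerfectMatching} // e ∈ M.1.edgeSet}

theorem Iso.numPerfectMatchingsThrough_map (f : G ≃g G') (e : Sym2 V) :
    G'.numPerfectMatchingsThrough (e.map f) = G.numPerfectMatchingsThrough e :=
  Nat.card_congr (f.perfectMatchingEquiv.subtypeEquiv fun _ => f.mem_edgeSet_map_iff.symm).symm

variable (G) in
def IsEdgeTransitive : Prop :=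
  ∀ e₁ e₂ : G.edgeSet, ∃ f : G ≃g G, (e₁ : Sym2 V).map f = e₂

theorem IsEdgeTransitive.numPerfectMatchingsThrough_eq (hG : G.IsEdgeTransitive)
    (e₁ e₂ : G.edgeSet) :
    G.numPerfectMatchingsThrough e₁ = G.numPerfectMatchingsThrough e₂ := by
  obtain ⟨f, hf⟩ := hG e₁ e₂
  rw [← hf, f.numPerfectMatchingsThrough_map]

theorem two_mul_sum_numPerfectMatchingsThrough [Fintype V] [Fintype G.edgeSet] :
    2 * ∑ e : G.edgeSet, G.numPerfectMatchingsThrough e =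
      Nat.card {M : G.Subgraph // M.IsPerfectMatching} * Fintype.card V := by
  classical
  let _ : Fintype {M : G.Subgraph // M.IsPerfectMatching} := Fintype.ofFinite _
  have hcount (e : G.edgeSet) : G.numPerfectMatchingsThrough e =
      ∑ M : {M : G.Subgraph // M.IsPerfectMatching},
        if (e : Sym2 V) ∈ M.1.edgeSet then 1 else 0 := by
    rw [numPerfectMatchingsThrough, Nat.card_eq_fintype_card, Fintype.card_subtype,
      Finset.sum_boole, Nat.cast_id]
  have hedges (M : {M : G.Subgraph // M.IsPerfectMatching}) :
      ∑ e : G.edgeSet, (if (e : Sym2 V) ∈ M.1.edgeSet then 1 else 0) = Nat.card M.1.edgeSet := by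
    rw [Finset.sum_boole, Nat.cast_id, ← Fintype.card_subtype, ← Nat.card_eq_fintype_card]
    exact Nat.card_congr (Equiv.subtypeSubtypeEquivSubtype fun he => M.1.edgeSet_subset he)
  simp_rw [hcount]
  rw [Finset.sum_comm, Finset.mul_sum]
  simp_rw [hedges, fun M : {M : G.Subgraph // M.IsPerfectMatching} => M.2.two_mul_card_edgeSet]
  simp [Nat.card_eq_fintype_card]

theorem IsEdgeTransitive.two_mul_card_edgeSet_mul_numPerfectMatchingsThrough
    [Fintype V] (hG : G.IsEdgeTransitive) (e : G.edgeSet) :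
    2 * (Nat.card G.edgeSet * G.numPerfectMatchingsThrough e) =
      Nat.card {M : G.Subgraph // M.IsPerfectMatching} * Fintype.card V := by
  classical
  rw [← two_mul_sum_numPerfectMatchingsThrough, Finset.sum_congr rfl fun e' _ =>
    hG.numPerfectMatchingsThrough_eq e' e, Finset.sum_const, Finset.card_univ, smul_eq_mul,
    Nat.card_eq_fintype_card]

end SimpleGraph

def petersenPermIso (σ : Equiv.Perm (Fin 5)) : Petersen ≃g Petersen where
  toEquiv := σ.finsetCongr.subtypeEquiv fun s => by simp
  map_rel_iff' := Finset.disjoint_map _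

set_option maxRecDepth 10000 in
theorem petersen_exists_permIso_of_disjoint :
    ∀ a b : {s : Finset (Fin 5) // s.card = 2}, Disjoint a.1 b.1 →
      ∃ σ, petersenPermIso σ ⟨{0, 1}, rfl⟩ = a ∧ petersenPermIso σ ⟨{2, 3}, rfl⟩ = b := by
  decide

theorem petersen_isEdgeTransitive : Petersen.IsEdgeTransitive := by
  suffices h : ∀ e : Petersen.edgeSet, ∃ f : Petersen ≃g Petersen,
      s(⟨{0, 1}, rfl⟩, ⟨{2, 3}, rfl⟩).map f = e by
    intro e₁ e₂
    obtain ⟨f₁, h₁⟩ := h e₁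
    obtain ⟨f₂, h₂⟩ := h e₂
    refine ⟨f₁.symm.trans f₂, ?_⟩
    rw [← h₁, ← h₂, Sym2.map_map]
    congr 1
    funext v
    simp
  rintro ⟨e, he⟩
  induction e using Sym2.ind with
  | _ a b =>
  obtain ⟨σ, ha, hb⟩ := petersen_exists_permIso_of_disjoint a b he
  exact ⟨petersenPermIso σ, by simp [ha, hb]⟩

theorem petersen_numPerfectMatchingsThrough (eE : Fin 15 ≃ Petersen.edgeSet)
    (eM : Fin 6 ≃ {M : Petersen.Subgraph // M.IsPerfectMatching}) (e : Petersen.edgeSet) :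
    Petersen.numPerfectMatchingsThrough e = 2 := by
  have h := petersen_isEdgeTransitive.two_mul_card_edgeSet_mul_numPerfectMatchingsThrough e
  rw [Nat.card_congr eE.symm, Nat.card_congr eM.symm, Nat.card_fin, Nat.card_fin,
    show Fintype.card {s : Finset (Fin 5) // s.card = 2} = 10 from rfl] at h
  omega

def blockCoeff (Δ : ℤ) (j : ℕ) : ℚ := if Odd j then (Δ : ℚ) ^ j else 0

theorem blockCoeff_zero (Δ : ℤ) : blockCoeff Δ 0 = 0 := by
  simp [blockCoeff]

theorem blockCoeff_succ_add (Δ : ℤ) (j : ℕ) :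
    blockCoeff Δ (j + 1) + Δ * blockCoeff Δ j = (Δ : ℚ) ^ (j + 1) := by
  rcases Nat.even_or_odd j with hj | hj
  · simp [blockCoeff, hj, Nat.not_odd_iff_even.mpr hj]
  · simp [blockCoeff, Nat.odd_add_one, hj, pow_succ, mul_comm]

section PetersenSystem

variable {d : ℕ} (Δ : ℤ) (eE : Fin 15 ≃ Petersen.edgeSet)
  (eM : Fin 6 ≃ {M : Petersen.Subgraph // M.IsPerfectMatching})

theorem fracSol_nonneg (hΔ : 0 ≤ Δ) (c : Fin (6 + 15 * d)) : 0 ≤ fracSol d Δ c := by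
  unfold fracSol
  split_ifs <;> positivity

theorem fracSol_natAdd (i : Fin (15 * d)) :
    fracSol d Δ (Fin.natAdd 6 i) = blockCoeff Δ (i / 15) := by
  simp [fracSol, blockCoeff]

theorem blockMatQ_natAdd (r i : Fin (15 * d)) :
    blockMatQ d Δ eE eM r (Fin.natAdd 6 i) =
      if (i : ℕ) = r then 1 else if (i : ℕ) + 15 = r then (Δ : ℚ) else 0 := by
  simp only [blockMatQ, Fin.val_natAdd, dif_neg (Nat.not_lt.mpr (Nat.le_add_right 6 _))]
  split_ifs <;> first | rfl | omega

theorem sum_castAdd_blockMatQ_mul_fracSol (r : Fin (15 * d)) :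
    ∑ c : Fin 6, blockMatQ d Δ eE eM r (Fin.castAdd _ c) * fracSol d Δ (Fin.castAdd _ c) =
      if (r : ℕ) < 15 then 1 else 0 := by
  by_cases hr : (r : ℕ) < 15
  · simp only [blockMatQ, fracSol, Fin.val_castAdd, Fin.is_lt, dif_pos, hr, if_true, Fin.eta]
    have hcount : Nat.card {c // (eE ⟨r, hr⟩ : Sym2 _) ∈ (eM c).1.edgeSet} =
        Petersen.numPerfectMatchingsThrough (eE ⟨r, hr⟩) :=
      Nat.card_congr (eM.subtypeEquiv fun _ => Iff.rfl)
    rw [← Finset.sum_mul, Finset.sum_boole, ← Fintype.card_subtype, ← Nat.card_eq_fintype_card,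
      hcount, petersen_numPerfectMatchingsThrough eE eM]
    norm_num
  · simp [blockMatQ, hr]

theorem sum_natAdd_blockMatQ_mul_fracSol (r : Fin (15 * d)) :
    ∑ i : Fin (15 * d), blockMatQ d Δ eE eM r (Fin.natAdd 6 i) * fracSol d Δ (Fin.natAdd 6 i) =
      blockCoeff Δ (r / 15) + if 15 ≤ (r : ℕ) then Δ * blockCoeff Δ (r / 15 - 1) else 0 := by
  simp only [blockMatQ_natAdd, fracSol_natAdd]
  rw [Fin.sum_univ_eq_sum_range
    (fun i => (if i = r then 1 else if i + 15 = r then (Δ : ℚ) else 0) * blockCoeff Δ (i / 15))]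
  -- `r - 15` truncates to `0` when `r < 15`, hence the guard `15 ≤ r`.
  have hsplit : ∀ i, (if i = (r : ℕ) then 1 else if i + 15 = r then (Δ : ℚ) else 0) *
      blockCoeff Δ (i / 15) = (if i = r then blockCoeff Δ (r / 15) else 0) +
        if i = r - 15 then (if 15 ≤ (r : ℕ) then Δ * blockCoeff Δ (r / 15 - 1) else 0) else 0 := by
    intro i
    split_ifs <;> simp only [one_mul, zero_mul, add_zero, zero_add] <;>
      first | rfl | omega | (congr 2 <;> omega)
  rw [Finset.sum_congr rfl fun i _ => hsplit i, Finset.sum_add_distrib, Finset.sum_ite_eq',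
    Finset.sum_ite_eq', if_pos (Finset.mem_range.mpr r.is_lt),
    if_pos (Finset.mem_range.mpr (by omega))]

end PetersenSystem

theorem stmt13_general (d : ℕ) (Δ : ℤ) (hΔ : 2 ≤ Δ)
    (eE : Fin 15 ≃ Petersen.edgeSet)
    (eM : Fin 6 ≃ {M : Petersen.Subgraph // M.IsPerfectMatching}) :
    (∀ c, 0 ≤ fracSol d Δ c) ∧
      (blockMatQ d Δ eE eM).mulVec (fracSol d Δ) = blockRhs d Δ := by
  refine ⟨fracSol_nonneg Δ (by omega), funext fun r => ?_⟩
  rw [Matrix.mulVec, dotProduct, Fin.sum_univ_add, sum_castAdd_blockMatQ_mul_fracSol,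
    sum_natAdd_blockMatQ_mul_fracSol, blockRhs]
  obtain hr | hr := lt_or_ge (r : ℕ) 15
  · simp [hr, Nat.div_eq_of_lt hr, blockCoeff_zero]
  · obtain ⟨j, hj⟩ : ∃ j, (r : ℕ) / 15 = j + 1 := ⟨r / 15 - 1, by omega⟩
    rw [if_neg hr.not_gt, if_pos hr, hj, Nat.add_sub_cancel, ← blockCoeff_succ_add]
    ring

/-- The vector taking each matching column with coefficient `1/2`, each odd
block of identity columns with coefficient `0` and each even block `j` with
coefficient `Δ^{j-1}` is a nonnegative rational solution of `Az = b`. -/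
theorem stmt13 (d : ℕ) (hd : Odd d) (Δ : ℤ) (hΔ : 2 ≤ Δ)
    (eE : Fin 15 ≃ Petersen.edgeSet)
    (eM : Fin 6 ≃ {M : Petersen.Subgraph // M.IsPerfectMatching}) :
    (∀ c, 0 ≤ fracSol d Δ c) ∧
      (blockMatQ d Δ eE eM).mulVec (fracSol d Δ) = blockRhs d Δ :=
  stmt13_general d Δ hΔ eE eM
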